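/- Every strongly connected digraph G on n ≥ 2 vertices with δ⁺(G) + δ⁻(G) ≥ n contains a Hamilton cycle. In particular, every digraph on n ≥ 2 vertices with minimum semidegree δ⁰(G) ≥ n/2 contains a Hamilton cycle. -/

import Mathlib

/-!
Take a longest cycle `C`; by the degree bounds it is longer than both `δ⁺` and `δ⁻`. If `C` misses
a vertex, take a longest path `Q` (with `k` vertices) outside `C`. The in-neighbours of its first
vertex and the out-neighbours of its last vertex lie on `Q ∪ C`, so on `C` they form sets `A`, `B`
with `|A| ≥ δ⁻ - k + 1` and `|B| ≥ δ⁺ - k + 1`. No `a ∈ A` lies `t ≤ k` steps before a `b ∈ B`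
along `C`, since `Q` could then replace the `t - 1` vertices between them and give a longer cycle.
Counting in the cyclic group `ZMod |C|` then gives `|A| + |B| + k ≤ |C| + 1`, and with
`k + |C| ≤ n` this contradicts `δ⁺ + δ⁻ ≥ n`.
-/

/-- The outdegree of a vertex `x` in the digraph with adjacency relation `G`. -/
noncomputable def outDeg {V : Type*} (G : V → V → Prop) (x : V) : ℕ :=
  Nat.card {y : V // G x y}

/-- The indegree of a vertex `x` in the digraph with adjacency relation `G`. -/
noncomputable def inDeg {V : Type*} (G : V → V → Prop) (x : V) : ℕ :=
  Nat.card {y : V // G y x}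

/-- A digraph is strongly connected if there is a directed path between any two vertices. -/
def StronglyConnected {V : Type*} (G : V → V → Prop) : Prop :=
  ∀ x y : V, Relation.ReflTransGen G x y

/-- `f` is a Hamilton cycle of the digraph `G`. -/
def IsHamCycle {V : Type*} [Fintype V] (G : V → V → Prop)
    (f : ZMod (Fintype.card V) → V) : Prop :=
  Function.Bijective f ∧ ∀ i, G (f i) (f (i + 1))

open Finset

namespace ZMod

variable {l : ℕ} [NeZero l]

theorem eq_univ_of_forall_sub_one_mem {B : Finset (ZMod l)} (hB : B.Nonempty)
    (h : ∀ b ∈ B, b - 1 ∈ B) : B = univ := by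
  obtain ⟨b, hb⟩ := hB
  have hsub : ∀ m : ℕ, b - m ∈ B := by
    intro m
    induction m with
    | zero => simpa using hb
    | succ m ih => simpa [sub_sub] using h _ ih
  exact eq_univ_of_forall fun x => by simpa using hsub (b - x).val

/-- `A` avoids `B - {1, …, k}`, which has at least `#B + k - 1` elements. -/
theorem card_add_card_add_le_of_forall_sub_notMem {A B : Finset (ZMod l)} {k : ℕ}
    (hA : A.Nonempty) (hB : B.Nonempty) (hk : 1 ≤ k)
    (hgap : ∀ t : ℕ, 1 ≤ t → t ≤ k → ∀ b ∈ B, b - t ∉ A) :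
    #A + #B + k ≤ l + 1 := by
  induction k, hk using Nat.le_induction generalizing B with
  | base =>
    have hdisj : Disjoint A (B.image (· - 1)) := by
      refine disjoint_right.2 fun x hx => ?_
      obtain ⟨b, hb, rfl⟩ := mem_image.1 hx
      simpa using hgap 1 le_rfl le_rfl b hb
    have := card_union_of_disjoint hdisj ▸ card_le_univ (A ∪ B.image (· - 1))
    rw [card_image_of_injective _ sub_left_injective, ZMod.card] at this
    omega
  | succ k hk ih =>
    have hgap' : ∀ t : ℕ, 1 ≤ t → t ≤ k → ∀ b ∈ B ∪ B.image (· - 1), b - t ∉ A := by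
      intro t ht htk b hb
      rcases mem_union.1 hb with hb | hb
      · exact hgap t ht (by omega) b hb
      · obtain ⟨b, hbB, rfl⟩ := mem_image.1 hb
        simpa [sub_sub, add_comm] using hgap (t + 1) (by omega) (by omega) b hbB
    have hBuniv : B ≠ univ := by
      obtain ⟨a, ha⟩ := hA
      intro h
      exact hgap 1 le_rfl (by omega) (a + 1) (h ▸ mem_univ _) (by simpa using ha)
    obtain ⟨b, hb, hb'⟩ : ∃ b ∈ B, b - 1 ∉ B := by
      by_contra! h
      exact hBuniv (eq_univ_of_forall_sub_one_mem hB h)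
    have hgrow : #B + 1 ≤ #(B ∪ B.image (· - 1)) := by
      rw [← card_insert_of_notMem hb']
      exact card_le_card (insert_subset (mem_union_right _ (mem_image_of_mem _ hb))
        subset_union_left)
    have := ih (hB.mono subset_union_left) hgap'
    omega

end ZMod

section Digraph

variable {V : Type*} (G : V → V → Prop)

def IsPathIn (S : Set V) (xs : List V) : Prop :=
  xs.Nodup ∧ xs.IsChain G ∧ ∀ v ∈ xs, v ∈ S

def IsLongestPathIn (S : Set V) (xs : List V) : Prop :=
  IsPathIn G S xs ∧ ∀ ys, IsPathIn G S ys → ys.length ≤ xs.length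

def IsCycle {l : ℕ} (c : ZMod l → V) : Prop :=
  Function.Injective c ∧ ∀ i, G (c i) (c (i + 1))

variable {G}

theorem outDeg_lt_card [Fintype V] (hloop : ∀ v, ¬ G v v) (v : V) :
    outDeg G v < Fintype.card V :=
  Nat.card_eq_fintype_card (α := V) ▸ Finite.card_subtype_lt (hloop v)

theorem List.exists_forall_length_le [Fintype V] {P : List V → Prop}
    (hP : ∀ xs, P xs → xs.Nodup) (hne : ∃ xs, P xs) :
    ∃ xs, P xs ∧ ∀ ys, P ys → ys.length ≤ xs.length :=
  Set.exists_max_image {xs | P xs} List.length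
    ((List.finite_length_le V (Fintype.card V)).subset fun xs hxs => (hP xs hxs).length_le_card)
    hne

theorem exists_isLongestPathIn [Fintype V] {S : Set V} (hS : S.Nonempty) :
    ∃ xs, xs ≠ [] ∧ IsLongestPathIn G S xs := by
  obtain ⟨v, hv⟩ := hS
  obtain ⟨xs, hxs, hmax⟩ := List.exists_forall_length_le (P := IsPathIn G S) (fun _ h => h.1)
    ⟨[v], by simp [IsPathIn, hv]⟩
  have := hmax [v] (by simp [IsPathIn, hv])
  exact ⟨xs, List.ne_nil_of_length_pos (by simp at this; omega), hxs, hmax⟩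

theorem IsPathIn.reverse {S : Set V} {xs : List V} (h : IsPathIn G S xs) :
    IsPathIn (flip G) S xs.reverse :=
  ⟨List.nodup_reverse.2 h.1, List.isChain_reverse.2 h.2.1, by simpa using h.2.2⟩

theorem IsLongestPathIn.reverse {S : Set V} {xs : List V} (h : IsLongestPathIn G S xs) :
    IsLongestPathIn (flip G) S xs.reverse :=
  ⟨h.1.reverse, fun ys hys => by simpa using h.2 _ hys.reverse⟩

theorem IsLongestPathIn.mem_of_adj_getLast {S : Set V} {xs : List V}
    (h : IsLongestPathIn G S xs) (hne : xs ≠ []) {w : V} (hw : G (xs.getLast hne) w)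
    (hwS : w ∈ S) : w ∈ xs := by
  by_contra hwxs
  have hpath : IsPathIn G S (xs ++ [w]) :=
    ⟨h.1.1.append (List.nodup_singleton w) (by simpa using hwxs),
      h.1.2.1.append (List.isChain_singleton w) (by simp [List.getLast?_eq_some_getLast hne, hw]),
      fun v hv => (List.mem_append.1 hv).elim (h.1.2.2 v)
        fun hv => List.eq_of_mem_singleton hv ▸ hwS⟩
  simpa using h.2 _ hpath

theorem IsLongestPathIn.outDeg_getLast_le [Fintype V] (hloop : ∀ v, ¬ G v v) {l : ℕ} [NeZero l]
    {c : ZMod l → V} {xs : List V} (h : IsLongestPathIn G (Set.range c)ᶜ xs) (hne : xs ≠ []) :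
    outDeg G (xs.getLast hne) ≤ xs.length - 1 + Nat.card {i // G (xs.getLast hne) (c i)} := by
  classical
  set x := xs.getLast hne
  have hsub : ({w | G x w} : Finset V) ⊆
      xs.toFinset.erase x ∪ ({i | G x (c i)} : Finset _).image c := by
    intro w hw
    have hxw : G x w := (mem_filter.1 hw).2
    by_cases hwc : w ∈ Set.range c
    · obtain ⟨i, rfl⟩ := hwc
      exact mem_union_right _ (mem_image_of_mem _ (by simpa using hxw))
    · refine mem_union_left _ (mem_erase.2 ⟨?_, List.mem_toFinset.2 ?_⟩)
      · intro hwx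
        exact hloop x (hwx ▸ hxw)
      · exact h.mem_of_adj_getLast hne hxw hwc
  calc outDeg G x = #({w | G x w} : Finset V) := Nat.subtype_card _ (by simp)
    _ ≤ #(xs.toFinset.erase x) + #(({i | G x (c i)} : Finset _).image c) :=
      (card_le_card hsub).trans (card_union_le _ _)
    _ ≤ xs.length - 1 + Nat.card {i // G x (c i)} := by
      rw [card_erase_of_mem (List.mem_toFinset.2 (List.getLast_mem hne)),
        List.toFinset_card_of_nodup h.1.1, Nat.subtype_card ({i | G x (c i)} : Finset _) (by simp)]
      gcongr
      exact card_image_le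

theorem IsLongestPathIn.inDeg_head_le [Fintype V] (hloop : ∀ v, ¬ G v v) {l : ℕ} [NeZero l]
    {c : ZMod l → V} {xs : List V} (h : IsLongestPathIn G (Set.range c)ᶜ xs) (hne : xs ≠ []) :
    inDeg G (xs.head hne) ≤ xs.length - 1 + Nat.card {i // G (c i) (xs.head hne)} := by
  have := IsLongestPathIn.outDeg_getLast_le (G := flip G) hloop h.reverse
    (List.reverse_ne_nil_iff.2 hne)
  simp only [List.getLast_reverse, List.length_reverse] at this
  exact this

theorem IsCycle.neZero [Finite V] {l : ℕ} {c : ZMod l → V} (hc : IsCycle G c) : NeZero l :=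
  ⟨by rintro rfl; exact not_injective_infinite_finite c hc.1⟩

theorem IsCycle.length_le_card [Fintype V] {l : ℕ} {c : ZMod l → V} (hc : IsCycle G c) :
    l ≤ Fintype.card V := by
  simpa [Nat.card_zmod] using Nat.card_le_card_of_injective c hc.1

theorem IsCycle.comp_neg {l : ℕ} {c : ZMod l → V} (hc : IsCycle (flip G) c) :
    IsCycle G (fun i => c (-i)) :=
  ⟨hc.1.comp neg_injective, fun i => by
    have h := hc.2 (-(i + 1))
    rwa [show -(i + 1) + 1 = -i by ring] at h⟩

theorem exists_isCycle_of_isChain {xs : List V} (hne : xs ≠ []) (hnd : xs.Nodup)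
    (hch : xs.IsChain G) (hclose : G (xs.getLast hne) (xs.head hne)) :
    ∃ c : ZMod xs.length → V, IsCycle G c := by
  have : NeZero xs.length := ⟨by simpa using hne⟩
  refine ⟨fun i => xs[i.val]'(ZMod.val_lt i), fun i j hij => ZMod.val_injective _ ?_, fun i => ?_⟩
  · exact Fin.mk.inj_iff.1 (List.nodup_iff_injective_getElem.1 hnd
      (a₁ := ⟨i.val, ZMod.val_lt i⟩) (a₂ := ⟨j.val, ZMod.val_lt j⟩) hij)
  · have hval : (i + 1).val = (i.val + 1) % xs.length := by
      rw [ZMod.val_add, ZMod.val_one_eq_one_mod, Nat.add_mod_mod]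
    have hi := ZMod.val_lt i
    by_cases hlt : i.val + 1 < xs.length
    · simp only [hval, Nat.mod_eq_of_lt hlt]
      exact List.isChain_iff_getElem.1 hch _ hlt
    · have hlast : i.val = xs.length - 1 := by omega
      simp only [hval, show i.val + 1 = xs.length by omega, Nat.mod_self]
      simpa [List.getLast_eq_getElem, List.head_eq_getElem, ← hlast] using hclose

/-- Close a longest path at the first out-neighbour of its last vertex. -/
theorem exists_isCycle_of_le_outDeg [Fintype V] [Nonempty V] (hloop : ∀ v, ¬ G v v) {d : ℕ}
    (hd : 0 < d) (hdeg : ∀ v, d ≤ outDeg G v) : ∃ l, d < l ∧ ∃ c : ZMod l → V, IsCycle G c := by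
  classical
  obtain ⟨xs, hne, hxs⟩ := exists_isLongestPathIn (G := G) (S := Set.univ) Set.univ_nonempty
  set x := xs.getLast hne
  set ys := xs.dropWhile fun v => !decide (G x v)
  have hsuf : ys <:+ xs := List.dropWhile_suffix _
  have hmem : ∀ w, G x w → w ∈ ys := by
    intro w hw
    have hwxs := hxs.mem_of_adj_getLast hne hw trivial
    rw [← List.takeWhile_append_dropWhile (l := xs) (p := fun v => !decide (G x v))] at hwxs
    refine (List.mem_append.1 hwxs).resolve_left fun hwt => ?_
    simpa [hw] using List.mem_takeWhile_imp hwt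
  obtain ⟨w, hw⟩ : ∃ w, G x w := by
    have := hd.trans_le (hdeg x)
    rw [outDeg, Nat.card_pos_iff] at this
    exact ⟨this.1.some.1, this.1.some.2⟩
  have hyne : ys ≠ [] := List.ne_nil_of_mem (hmem w hw)
  have hlast : ys.getLast hyne = x := hsuf.getLast hyne
  have hhead : G x (ys.head hyne) := by simpa using List.head_dropWhile_not _ hyne
  obtain ⟨c, hc⟩ := exists_isCycle_of_isChain hyne (hsuf.nodup hxs.1.1) (hxs.1.2.1.suffix hsuf)
    (hlast ▸ hhead)
  refine ⟨ys.length, ?_, c, hc⟩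
  have hsub : ({w | G x w} : Finset V) ⊆ ys.toFinset.erase x := fun w hw =>
    mem_erase.2 ⟨fun hwx => hloop x (hwx ▸ (mem_filter.1 hw).2),
      List.mem_toFinset.2 (hmem w (mem_filter.1 hw).2)⟩
  have hx : x ∈ ys.toFinset := List.mem_toFinset.2 (hlast ▸ List.getLast_mem hyne)
  have := (hdeg x).trans ((Nat.subtype_card _ (by simp)).trans_le (card_le_card hsub))
  rw [card_erase_of_mem hx, List.toFinset_card_of_nodup (hsuf.nodup hxs.1.1)] at this
  have := List.length_pos_iff.2 hyne
  omega

theorem exists_isCycle_of_le_inDeg [Fintype V] [Nonempty V] (hloop : ∀ v, ¬ G v v) {d : ℕ}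
    (hd : 0 < d) (hdeg : ∀ v, d ≤ inDeg G v) : ∃ l, d < l ∧ ∃ c : ZMod l → V, IsCycle G c := by
  obtain ⟨l, hdl, c, hc⟩ := exists_isCycle_of_le_outDeg (G := flip G) hloop hd hdeg
  exact ⟨l, hdl, _, hc.comp_neg⟩

theorem IsCycle.exists_isCycle_bypass {l : ℕ} [NeZero l] {c : ZMod l → V} (hc : IsCycle G c)
    {Q : List V} (hQ : IsPathIn G (Set.range c)ᶜ Q) (hQne : Q ≠ []) {a : ZMod l} {t : ℕ}
    (ht : 0 < t) (htl : t ≤ l) (htQ : t ≤ Q.length)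
    (ha : G (c a) (Q.head hQne)) (hb : G (Q.getLast hQne) (c (a + t))) :
    ∃ m, l < m ∧ ∃ c' : ZMod m → V, IsCycle G c' := by
  set P := (List.range (l - t + 1)).map fun s : ℕ => c (a + t + s)
  have hPne : P ≠ [] := by simp [P]
  have hPhead : P.head hPne = c (a + t) := by simp [P]
  have hPlast : P.getLast hPne = c a := by
    simp [P, List.getLast_map, List.getLast_range, Nat.cast_sub htl, add_assoc]
  have hPnd : P.Nodup := by
    refine List.nodup_range.map_on fun s hs s' hs' hss' => ?_
    rw [List.mem_range] at hs hs'
    have := congrArg ZMod.val (add_left_cancel (hc.1 hss'))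
    rwa [ZMod.val_cast_of_lt (by omega), ZMod.val_cast_of_lt (by omega)] at this
  have hPch : P.IsChain G := by
    refine (List.isChain_map _).2 ((List.isChain_range_succ _ _).2 fun s _ => ?_)
    simpa [add_assoc] using hc.2 (a + t + s)
  have hdisj : Q.Disjoint P := by
    intro v hvQ hvP
    obtain ⟨s, -, rfl⟩ := List.mem_map.1 hvP
    exact hQ.2.2 _ hvQ ⟨_, rfl⟩
  have hQPne : Q ++ P ≠ [] := by simp [hQne]
  obtain ⟨c', hc'⟩ := exists_isCycle_of_isChain hQPne (hQ.1.append hPnd hdisj)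
    (hQ.2.1.append hPch (by simp [List.getLast?_eq_some_getLast hQne,
      List.head?_eq_some_head hPne, hPhead, hb]))
    (by rwa [List.getLast_append_of_ne_nil _ hPne, List.head_append_of_ne_nil hQne, hPlast])
  exact ⟨_, by simp [P]; omega, c', hc'⟩

theorem exists_isCycle_forall_length_le [Fintype V] (h : ∃ l, ∃ c : ZMod l → V, IsCycle G c) :
    ∃ l, ∃ c : ZMod l → V, IsCycle G c ∧ ∀ m (d : ZMod m → V), IsCycle G d → m ≤ l := by
  obtain ⟨l, ⟨c, hc⟩, hmax⟩ := Set.exists_max_image {l | ∃ c : ZMod l → V, IsCycle G c} id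
    ((Set.finite_Iic (Fintype.card V)).subset fun _ ⟨_, hc⟩ => hc.length_le_card) h
  exact ⟨l, c, hc, fun m d hd => hmax m ⟨d, hd⟩⟩

theorem IsCycle.length_eq_card [Fintype V] (hloop : ∀ v, ¬ G v v) {p q : ℕ}
    (hp : ∀ v, p ≤ outDeg G v) (hq : ∀ v, q ≤ inDeg G v) (hpq : Fintype.card V ≤ p + q)
    {l : ℕ} {c : ZMod l → V} (hc : IsCycle G c) (hpl : p < l) (hql : q < l)
    (hmax : ∀ m (d : ZMod m → V), IsCycle G d → m ≤ l) : l = Fintype.card V := by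
  classical
  have := hc.neZero
  refine hc.length_le_card.antisymm (not_lt.1 fun hln => ?_)
  obtain ⟨v, hv⟩ : ∃ v, v ∉ Set.range c := by
    by_contra! h
    have := Fintype.card_le_of_surjective c h
    rw [ZMod.card] at this
    omega
  obtain ⟨Q, hQne, hQ⟩ := exists_isLongestPathIn (G := G) (S := (Set.range c)ᶜ) ⟨v, hv⟩
  have hk : 0 < Q.length := List.length_pos_iff.2 hQne
  have hkl : Q.length + l ≤ Fintype.card V := by
    have hdisj : Disjoint Q.toFinset (univ.image c) := disjoint_left.2 fun v hvQ hvc =>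
      hQ.1.2.2 v (List.mem_toFinset.1 hvQ) (by simpa using hvc)
    have := card_union_of_disjoint hdisj ▸ card_le_univ (Q.toFinset ∪ univ.image c)
    rwa [List.toFinset_card_of_nodup hQ.1.1, card_image_of_injective _ hc.1, card_univ,
      ZMod.card] at this
  set A : Finset (ZMod l) := {i | G (c i) (Q.head hQne)}
  set B : Finset (ZMod l) := {i | G (Q.getLast hQne) (c i)}
  have hA : q ≤ Q.length - 1 + #A := by
    have := (hq _).trans (hQ.inDeg_head_le hloop hQne)
    rwa [Nat.subtype_card A (by simp [A])] at this
  have hB : p ≤ Q.length - 1 + #B := by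
    have := (hp _).trans (hQ.outDeg_getLast_le hloop hQne)
    rwa [Nat.subtype_card B (by simp [B])] at this
  have hgap : ∀ t : ℕ, 1 ≤ t → t ≤ Q.length → ∀ b ∈ B, b - t ∉ A := by
    intro t ht htQ b hb ha
    obtain ⟨m, hlm, d, hd⟩ := hc.exists_isCycle_bypass hQ.1 hQne ht (by omega) htQ
      (by simpa [A] using ha) (by simpa [B] using hb)
    exact (hmax m d hd).not_gt hlm
  have := ZMod.card_add_card_add_le_of_forall_sub_notMem (card_pos.1 (by omega))
    (card_pos.1 (by omega)) hk hgap
  omega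

theorem IsCycle.isHamCycle [Fintype V] {c : ZMod (Fintype.card V) → V} (hc : IsCycle G c) :
    IsHamCycle G c :=
  ⟨hc.1.bijective_of_nat_card_le (by simp [Nat.card_zmod]), hc.2⟩

theorem exists_isHamCycle_of_card_le_add [Fintype V] [Nonempty V] (hloop : ∀ v, ¬ G v v)
    {p q : ℕ} (hp : ∀ v, p ≤ outDeg G v) (hq : ∀ v, q ≤ inDeg G v)
    (hpq : Fintype.card V ≤ p + q) : ∃ f, IsHamCycle G f := by
  obtain ⟨v⟩ := ‹Nonempty V›
  have hout := outDeg_lt_card hloop v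
  have hin : inDeg G v < Fintype.card V := outDeg_lt_card (G := flip G) hloop v
  obtain ⟨lp, hlp, cp, hcp⟩ := exists_isCycle_of_le_outDeg hloop (by have := hq v; omega) hp
  obtain ⟨lq, hlq, cq, hcq⟩ := exists_isCycle_of_le_inDeg hloop (by have := hp v; omega) hq
  obtain ⟨l, c, hc, hmax⟩ := exists_isCycle_forall_length_le ⟨lp, cp, hcp⟩
  obtain rfl := hc.length_eq_card hloop hp hq hpq (hlp.trans_le (hmax _ _ hcp))
    (hlq.trans_le (hmax _ _ hcq)) hmax
  exact ⟨c, hc.isHamCycle⟩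

end Digraph

/-- Ghouila-Houri's theorem: every strongly connected digraph on n ≥ 2 vertices with
δ⁺(G) + δ⁻(G) ≥ n has a Hamilton cycle; in particular so does every digraph on n ≥ 2
vertices with minimum semidegree at least n/2. -/
theorem ghouila_houri :
    (∀ (V : Type) [Fintype V] (G : V → V → Prop),
      Irreflexive G →
      2 ≤ Fintype.card V →
      StronglyConnected G →
      Fintype.card V ≤ sInf (Set.range (outDeg G)) + sInf (Set.range (inDeg G)) →
      ∃ f : ZMod (Fintype.card V) → V, IsHamCycle G f) ∧
    (∀ (V : Type) [Fintype V] (G : V → V → Prop),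
      Irreflexive G →
      2 ≤ Fintype.card V →
      (∀ x : V, (Fintype.card V : ℝ) / 2 ≤ (outDeg G x : ℝ) ∧
        (Fintype.card V : ℝ) / 2 ≤ (inDeg G x : ℝ)) →
      ∃ f : ZMod (Fintype.card V) → V, IsHamCycle G f) := by
  refine ⟨fun V _ G hloop hV _ hpq => ?_, fun V _ G hloop hV hdeg => ?_⟩
  · have : Nonempty V := Fintype.card_pos_iff.1 (by omega)
    exact exists_isHamCycle_of_card_le_add hloop (fun v => Nat.sInf_le (Set.mem_range_self v))
      (fun v => Nat.sInf_le (Set.mem_range_self v)) hpq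
  · have : Nonempty V := Fintype.card_pos_iff.1 (by omega)
    have hhalf (d : ℕ) (hd : (Fintype.card V : ℝ) / 2 ≤ d) : (Fintype.card V + 1) / 2 ≤ d := by
      have : (Fintype.card V : ℝ) ≤ 2 * d := by linarith
      have : Fintype.card V ≤ 2 * d := by exact_mod_cast this
      omega
    exact exists_isHamCycle_of_card_le_add hloop (fun v => hhalf _ (hdeg v).1)
      (fun v => hhalf _ (hdeg v).2) (by omega)
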